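/- Let f be the fair-on-bids recursion. If two distinct bids b and b' both appear among the bids of the transactions of f(M, b::B', t), then Q(M) ≥ q_b − t. Equivalently, a bid other than the top bid can only be matched if there is enough total volume in M to fully trade the remaining quantity of the top bid. -/
import Mathlib


structure Bid where
  id : ℕ
  timestamp : ℕ
  quantity : ℕ
  price : ℕ
deriving DecidableEq

structure Ask where
  id : ℕ
  timestamp : ℕ
  quantity : ℕ
  price : ℕ
deriving DecidableEq

structure Transaction where
  bid : Bid
  ask : Ask
  quantity : ℕ
  price : ℕ
deriving DecidableEq

/-- Total traded quantity of a list of transactions. -/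
def Qty (M : List Transaction) : ℕ := (M.map Transaction.quantity).sum

/-- Total traded quantity of bid `b` in `M`. -/
def QtyBid (b : Bid) (M : List Transaction) : ℕ :=
  ((M.filter (fun m => m.bid == b)).map Transaction.quantity).sum

/-- Total traded quantity of ask `a` in `M`. -/
def QtyAsk (a : Ask) (M : List Transaction) : ℕ :=
  ((M.filter (fun m => m.ask == a)).map Transaction.quantity).sum

/-- Total traded quantity between bid `b` and ask `a` in `M`. -/
def QtyBidAsk (b : Bid) (a : Ask) (M : List Transaction) : ℕ :=
  ((M.filter (fun m => m.bid == b && m.ask == a)).map Transaction.quantity).sum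

/-- Sum of quantities of a list of bids. -/
def QB (B : List Bid) : ℕ := (B.map Bid.quantity).sum

/-- Sum of quantities of a list of asks. -/
def QA (A : List Ask) : ℕ := (A.map Ask.quantity).sum

/-- `M` is a matching between bids `B` and asks `A`. -/
def Matching (B : List Bid) (A : List Ask) (M : List Transaction) : Prop :=
  (∀ m ∈ M, m.ask.price ≤ m.bid.price) ∧
  (∀ m ∈ M, m.bid ∈ B) ∧
  (∀ m ∈ M, m.ask ∈ A) ∧
  (∀ b ∈ B, QtyBid b M ≤ b.quantity) ∧
  (∀ a ∈ A, QtyAsk a M ≤ a.quantity)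

/-- Individual rationality. -/
def IsIR (M : List Transaction) : Prop :=
  ∀ m ∈ M, m.ask.price ≤ m.price ∧ m.price ≤ m.bid.price

/-- Uniformity: all trade prices equal. -/
def IsUniform (M : List Transaction) : Prop :=
  ∀ m1 ∈ M, ∀ m2 ∈ M, m1.price = m2.price

/-- `b1` is more competitive than `b2`. -/
def MoreCompetitiveBid (b1 b2 : Bid) : Prop :=
  b2.price < b1.price ∨ (b1.price = b2.price ∧ b1.timestamp < b2.timestamp)

/-- `a1` is more competitive than `a2`. -/
def MoreCompetitiveAsk (a1 a2 : Ask) : Prop :=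
  a1.price < a2.price ∨ (a1.price = a2.price ∧ a1.timestamp < a2.timestamp)

def FairOnBids (B : List Bid) (M : List Transaction) : Prop :=
  ∀ b1 ∈ B, ∀ b2 ∈ B, MoreCompetitiveBid b1 b2 → 1 ≤ QtyBid b2 M →
    QtyBid b1 M = b1.quantity

def FairOnAsks (A : List Ask) (M : List Transaction) : Prop :=
  ∀ a1 ∈ A, ∀ a2 ∈ A, MoreCompetitiveAsk a1 a2 → 1 ≤ QtyAsk a2 M →
    QtyAsk a1 M = a1.quantity

def IsFair (B : List Bid) (A : List Ask) (M : List Transaction) : Prop :=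
  FairOnBids B M ∧ FairOnAsks A M

/-- "at least as competitive as" order on bids (for sorting, most competitive first). -/
def BidGE (b1 b2 : Bid) : Prop := ¬ MoreCompetitiveBid b2 b1

/-- "at least as competitive as" order on asks (for sorting, most competitive first). -/
def AskGE (a1 a2 : Ask) : Prop := ¬ MoreCompetitiveAsk a2 a1

/-- The fair-on-bids recursion `f(M, B, t)`. -/
def fob : List Transaction → List Bid → ℕ → List Transaction
  | [], _, _ => []
  | _ :: _, [], _ => []
  | m :: M', b :: B', t =>
    if m.quantity = b.quantity - t then
      ⟨b, m.ask, m.quantity, m.price⟩ :: fob M' B' 0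
    else if m.quantity < b.quantity - t then
      ⟨b, m.ask, m.quantity, m.price⟩ :: fob M' (b :: B') (t + m.quantity)
    else
      ⟨b, m.ask, b.quantity - t, m.price⟩ ::
        fob (⟨m.bid, m.ask, m.quantity - (b.quantity - t), m.price⟩ :: M') B' 0
termination_by M B _ => M.length + B.length
decreasing_by all_goals (simp; try omega)

lemma fob_low_vol (M : List Transaction) : ∀ (b : Bid) (B' : List Bid) (t : ℕ),
    Qty M < b.quantity - t → ∀ x ∈ fob M (b :: B') t, x.bid = b := by
  induction M with
  | nil => intro b B' t _ x hx; simp [fob] at hx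
  | cons m M' ih =>
    intro b B' t hlt x hx
    have hq : Qty (m :: M') = m.quantity + Qty M' := by simp [Qty]
    have h1 : m.quantity ≠ b.quantity - t := by omega
    have h2 : m.quantity < b.quantity - t := by omega
    rw [fob, if_neg h1, if_pos h2] at hx
    rcases List.mem_cons.mp hx with hx | hx
    · rw [hx]
    · exact ih b B' (t + m.quantity) (by omega) x hx

theorem statement_8 (M : List Transaction) (b b' : Bid) (B' : List Bid) (t : ℕ)
    (hnodup : (((b :: B').map Bid.id)).Nodup)
    (hne : b ≠ b')
    (hb : b ∈ (fob M (b :: B') t).map Transaction.bid)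
    (hb' : b' ∈ (fob M (b :: B') t).map Transaction.bid) :
    b.quantity - t ≤ Qty M := by
  by_contra h
  push_neg at h
  obtain ⟨x, hx, hxb⟩ := List.mem_map.mp hb'
  exact hne (hxb ▸ (fob_low_vol M b B' t h x hx)).symm
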